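/- arXiv:math/0703354 — 10 statements merged into one kernel-verified Lean document; each statement's English description precedes it below -/
import Mathlib

section
/- If p ≥ 3 is a natural number and (p-3)! ≡ (p-1)/2 (mod p) where p is odd (so (p-1)/2 is an integer), then p is prime. -/
theorem stmt2 (p : ℕ) (hp : 3 ≤ p) (hodd : Odd p)
    (h : ((p - 3).factorial : ℤ) ≡ (((p - 1) / 2 : ℕ) : ℤ) [ZMOD p]) :
    p.Prime := by
  obtain ⟨m, hm⟩ : ∃ m, p = 2 * m + 3 := by
    obtain ⟨j, hj⟩ := hodd; exact ⟨j - 1, by omega⟩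
  apply Nat.prime_of_fac_equiv_neg_one _ (by omega)
  have h' : ((2 * m).factorial : ZMod p) = ((m + 1 : ℕ) : ZMod p) := by
    have := (ZMod.intCast_eq_intCast_iff' _ _ _).mpr h
    rw [show p - 3 = 2 * m by omega, show (p - 1) / 2 = m + 1 by omega] at this
    exact_mod_cast this
  have hp0 : ((2 * m + 3 : ℕ) : ZMod p) = 0 := by rw [← hm]; exact ZMod.natCast_self p
  have hfac : (p - 1).factorial = (2 * m + 2) * ((2 * m + 1) * (2 * m).factorial) := by
    rw [show p - 1 = 2 * m + 1 + 1 by omega, Nat.factorial_succ, Nat.factorial_succ]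
  rw [hfac]
  push_cast at hp0 h' ⊢
  linear_combination (2 * (m : ZMod p) + 2) * ((m : ZMod p) + 1) * hp0 +
    (2 * (m : ZMod p) + 2) * (2 * (m : ZMod p) + 1) * h' - hp0 - 2 * (m : ZMod p) * hp0
end

section
/- A natural number p > 4 is prime if and only if (p-4)! ≡ (-1)^(⌊p/3⌋+1) · ⌊(p+1)/6⌋ (mod p). -/
lemma mul_dvd_fac {a b n : ℕ} (ha : 0 < a) (hab : a < b) (hbn : b ≤ n) :
    a * b ∣ n.factorial := by
  have h1 : a ∣ (b - 1).factorial := Nat.dvd_factorial ha (by omega)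
  have h2 : a * b ∣ b.factorial := by
    rw [show b = (b-1)+1 by omega, Nat.factorial_succ, mul_comm a ((b-1)+1)]
    exact mul_dvd_mul_left _ (by simpa using h1)
  exact h2.trans (Nat.factorial_dvd_factorial hbn)

lemma comp_dvd {p : ℕ} (hp : 4 < p) (hc : ¬ p.Prime) : p ∣ (p - 1).factorial := by
  obtain ⟨a, ha, h2, hlt⟩ := Nat.exists_dvd_of_not_prime2 (by omega) hc
  obtain ⟨b, rfl⟩ := ha
  have hb2 : 2 ≤ b := by nlinarith
  rcases lt_trichotomy a b with h | rfl | h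
  · have hb : b + 1 ≤ a * b := by nlinarith
    exact mul_dvd_fac (by omega) h (by omega)
  · have ha3 : 3 ≤ a := by nlinarith
    have hd : a * a ∣ a * (2 * a) := ⟨2, by ring⟩
    have h2a : 2 * a + 1 ≤ a * a := by nlinarith
    exact hd.trans (mul_dvd_fac (by omega) (by omega) (by omega))
  · have hb : a + 1 ≤ a * b := by nlinarith
    have := mul_dvd_fac (a := b) (b := a) (n := a * b - 1) (by omega) h (by omega)
    simpa [mul_comm] using this

lemma fac_key (p : ℕ) (hp : 4 < p) :
    (((p - 1).factorial : ℕ) : ZMod p) = -6 * ((p - 4).factorial : ZMod p) := by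
  obtain ⟨n, rfl⟩ : ∃ n, p = n + 5 := ⟨p - 5, by omega⟩
  rw [show n + 5 - 1 = n + 4 by omega, show n + 5 - 4 = n + 1 by omega]
  have hfac : (n + 4).factorial = (n+4) * ((n+3) * ((n+2) * (n+1).factorial)) := rfl
  rw [hfac]
  have h0 : ((n : ZMod (n+5)) + 5) = 0 := by
    have := ZMod.natCast_self (n+5); push_cast at this; exact this
  push_cast
  linear_combination (((n : ZMod (n+5)))^2 + 4*(n:ZMod (n+5)) + 6) * ((n+1).factorial : ZMod (n+5)) * h0

theorem stmt5 (p : ℕ) (hp : 4 < p) :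
    p.Prime ↔ (((p - 4).factorial : ℤ) ≡ (-1) ^ (p / 3 + 1) * (((p + 1) / 6 : ℕ) : ℤ) [ZMOD p]) := by
  haveI : NeZero p := ⟨by omega⟩
  rw [← ZMod.intCast_eq_intCast_iff]
  push_cast
  have hF := fac_key p hp
  constructor
  · intro hprime
    haveI : Fact p.Prime := ⟨hprime⟩
    have hW : (((p-1).factorial : ℕ) : ZMod p) = -1 := ZMod.wilsons_lemma p
    have h6F : (-6 : ZMod p) * ((p - 4).factorial : ZMod p) = -1 := by rw [← hF]; exact hW
    have hne : (-6 : ZMod p) ≠ 0 := by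
      intro h
      have h6 : ((6 : ℕ) : ZMod p) = 0 := by push_cast; linear_combination -h
      rw [ZMod.natCast_eq_zero_iff] at h6
      have := Nat.le_of_dvd (by norm_num) h6
      interval_cases p
      · exact absurd h6 (by decide)
      · exact absurd hprime (by decide)
    have h2 : ¬ 2 ∣ p := fun h => by
      rcases hprime.eq_one_or_self_of_dvd 2 h with h' | h' <;> omega
    have h3 : ¬ 3 ∣ p := fun h => by
      rcases hprime.eq_one_or_self_of_dvd 3 h with h' | h' <;> omega
    obtain ⟨k, hpk⟩ : ∃ k, p = 6*k + 1 ∨ p = 6*k + 5 := ⟨p / 6, by omega⟩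
    rcases hpk with hpk | hpk
    · rw [show p / 3 + 1 = 2*k + 1 by omega, show ((p:ℤ)+1)/6 = (k:ℤ) by omega,
        Odd.neg_one_pow ⟨k, by ring⟩]
      have hc : ((6*k+1 : ℕ) : ZMod p) = 0 := by rw [← hpk]; exact ZMod.natCast_self p
      push_cast at hc ⊢
      apply mul_left_cancel₀ hne
      rw [h6F]
      linear_combination -hc
    · rw [show p / 3 + 1 = 2*k + 2 by omega, show ((p:ℤ)+1)/6 = ((k:ℤ)+1) by omega,
        Even.neg_one_pow ⟨k+1, by ring⟩]
      have hc : ((6*k+5 : ℕ) : ZMod p) = 0 := by rw [← hpk]; exact ZMod.natCast_self p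
      push_cast at hc ⊢
      apply mul_left_cancel₀ hne
      rw [h6F]
      linear_combination hc
  · intro hcong
    by_contra hnp
    have hW0 : (((p-1).factorial : ℕ) : ZMod p) = 0 :=
      (ZMod.natCast_eq_zero_iff _ _).mpr (comp_dvd hp hnp)
    obtain ⟨k, hpk⟩ : ∃ k, p = 6*k ∨ p = 6*k+1 ∨ p = 6*k+2 ∨ p = 6*k+3 ∨ p = 6*k+4 ∨ p = 6*k+5 :=
      ⟨p / 6, by omega⟩
    rcases hpk with hpk | hpk | hpk | hpk | hpk | hpk
    · -- p = 6k
      rcases eq_or_lt_of_le (show 1 ≤ k by omega) with h1 | h1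
      · -- p = 6
        have hp6 : p = 6 := by omega
        subst hp6
        revert hcong; decide
      · -- k ≥ 2 : p ∣ (p-4)!
        have hd : p ∣ (p - 4).factorial := by
          rw [hpk, show 6*k = 2*(3*k) by ring]
          exact mul_dvd_fac (by omega) (by omega) (by omega)
        have hF0 : ((p - 4).factorial : ZMod p) = 0 :=
          (ZMod.natCast_eq_zero_iff _ _).mpr hd
        rw [show p / 3 + 1 = 2*k + 1 by omega, show ((p:ℤ)+1)/6 = (k:ℤ) by omega,
          Odd.neg_one_pow ⟨k, by ring⟩, hF0] at hcong
        push_cast at hcong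
        have hk0 : ((k : ℕ) : ZMod p) = 0 := by linear_combination hcong
        rw [ZMod.natCast_eq_zero_iff] at hk0
        have := Nat.le_of_dvd (by omega) hk0
        omega
    · -- p = 6k+1
      rw [show p / 3 + 1 = 2*k + 1 by omega, show ((p:ℤ)+1)/6 = (k:ℤ) by omega,
        Odd.neg_one_pow ⟨k, by ring⟩] at hcong
      have hc : ((6*k+1 : ℕ) : ZMod p) = 0 := by rw [← hpk]; exact ZMod.natCast_self p
      push_cast at hc
      push_cast at hcong
      have h1 : ((1 : ℕ) : ZMod p) = 0 := by
        push_cast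
        linear_combination hc - 6*hcong + hF - hW0
      rw [ZMod.natCast_eq_zero_iff] at h1
      have := Nat.le_of_dvd (by norm_num) h1
      omega
    · -- p = 6k+2
      rw [show p / 3 + 1 = 2*k + 1 by omega, show ((p:ℤ)+1)/6 = (k:ℤ) by omega,
        Odd.neg_one_pow ⟨k, by ring⟩] at hcong
      have hc : ((6*k+2 : ℕ) : ZMod p) = 0 := by rw [← hpk]; exact ZMod.natCast_self p
      push_cast at hc
      push_cast at hcong
      have h1 : ((2 : ℕ) : ZMod p) = 0 := by
        push_cast
        linear_combination hc - 6*hcong + hF - hW0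
      rw [ZMod.natCast_eq_zero_iff] at h1
      have := Nat.le_of_dvd (by norm_num) h1
      omega
    · -- p = 6k+3
      rw [show p / 3 + 1 = 2*k + 2 by omega, show ((p:ℤ)+1)/6 = (k:ℤ) by omega,
        Even.neg_one_pow ⟨k+1, by ring⟩] at hcong
      have hc : ((6*k+3 : ℕ) : ZMod p) = 0 := by rw [← hpk]; exact ZMod.natCast_self p
      push_cast at hc
      push_cast at hcong
      have h1 : ((3 : ℕ) : ZMod p) = 0 := by
        push_cast
        linear_combination hc + 6*hcong - hF + hW0
      rw [ZMod.natCast_eq_zero_iff] at h1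
      have := Nat.le_of_dvd (by norm_num) h1
      omega
    · -- p = 6k+4
      rw [show p / 3 + 1 = 2*k + 2 by omega, show ((p:ℤ)+1)/6 = (k:ℤ) by omega,
        Even.neg_one_pow ⟨k+1, by ring⟩] at hcong
      have hc : ((6*k+4 : ℕ) : ZMod p) = 0 := by rw [← hpk]; exact ZMod.natCast_self p
      push_cast at hc
      push_cast at hcong
      have h1 : ((4 : ℕ) : ZMod p) = 0 := by
        push_cast
        linear_combination hc + 6*hcong - hF + hW0
      rw [ZMod.natCast_eq_zero_iff] at h1
      have := Nat.le_of_dvd (by norm_num) h1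
      omega
    · -- p = 6k+5
      rw [show p / 3 + 1 = 2*k + 2 by omega, show ((p:ℤ)+1)/6 = ((k:ℤ)+1) by omega,
        Even.neg_one_pow ⟨k+1, by ring⟩] at hcong
      have hc : ((6*k+5 : ℕ) : ZMod p) = 0 := by rw [← hpk]; exact ZMod.natCast_self p
      push_cast at hc
      push_cast at hcong
      have h1 : ((1 : ℕ) : ZMod p) = 0 := by
        push_cast
        linear_combination -hc - 6*hcong + hF - hW0
      rw [ZMod.natCast_eq_zero_iff] at h1
      have := Nat.le_of_dvd (by norm_num) h1
      omega
end

section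
/- If p > 4 is prime, then (p-4)! ≡ (-1)^(⌊p/3⌋+1) · ⌊(p+1)/6⌋ (mod p). -/
theorem stmt6 (p : ℕ) (hp : 4 < p) (hprime : p.Prime) :
    ((p - 4).factorial : ℤ) ≡ (-1) ^ (p / 3 + 1) * (((p + 1) / 6 : ℕ) : ℤ) [ZMOD p] := by
  haveI : Fact p.Prime := ⟨hprime⟩
  -- 6 * (p-4)! = 1 in ZMod p
  have hfac : (p - 1).factorial = (p - 1) * ((p - 2) * ((p - 3) * (p - 4).factorial)) := by
    have h1 : p - 1 = (p - 4) + 3 := by omega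
    have h2 : p - 2 = (p - 4) + 2 := by omega
    have h3 : p - 3 = (p - 4) + 1 := by omega
    rw [h1, h2, h3, Nat.factorial_succ, Nat.factorial_succ, Nat.factorial_succ]
  have ecast : ∀ k : ℕ, k ≤ p → ((p - k : ℕ) : ZMod p) = -(k : ZMod p) := by
    intro k hk
    rw [Nat.cast_sub hk, ZMod.natCast_self, zero_sub]
  have hw : ((p - 1).factorial : ZMod p) = -1 := ZMod.wilsons_lemma p
  rw [hfac] at hw
  push_cast at hw
  rw [ecast 1 (by omega), ecast 2 (by omega), ecast 3 (by omega)] at hw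
  have h6 : (6 : ZMod p) * ((p - 4).factorial : ZMod p) = 1 := by
    push_cast at hw ⊢
    linear_combination -hw
  have h6ne : (6 : ZMod p) ≠ 0 := by
    intro h
    have : ((6 : ℕ) : ZMod p) = 0 := by push_cast; exact h
    have hd := (ZMod.natCast_eq_zero_iff 6 p).mp this
    have := Nat.le_of_dvd (by norm_num) hd
    interval_cases p <;> revert hd hprime <;> decide
  have h2 : ¬ (2 ∣ p) := fun h => by
    have := (Nat.prime_dvd_prime_iff_eq (by norm_num) hprime).mp h; omega
  have h3 : ¬ (3 ∣ p) := fun h => by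
    have := (Nat.prime_dvd_prime_iff_eq (by norm_num) hprime).mp h; omega
  have hmod : p % 6 = 1 ∨ p % 6 = 5 := by omega
  rcases hmod with hm | hm
  · have hd3 : p / 3 = 2 * (p / 6) := by omega
    have hd6 : (p + 1) / 6 = p / 6 := by omega
    have hpk : 6 * (p / 6) = p - 1 := by omega
    have key : (6 : ZMod p) * ((p / 6 : ℕ) : ZMod p) = -1 := by
      have := ecast 1 (by omega)
      rw [← hpk] at this
      push_cast at this
      linear_combination this
    rw [hd3, hd6, ← ZMod.intCast_eq_intCast_iff]
    simp only [Int.cast_mul, Int.cast_pow, Int.cast_neg, Int.cast_one, Int.cast_natCast]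
    apply mul_left_cancel₀ h6ne
    rw [h6, pow_succ, pow_mul]
    simp only [neg_one_sq, one_pow, one_mul]
    linear_combination key
  · have hd3 : p / 3 = 2 * (p / 6) + 1 := by omega
    have hd6 : (p + 1) / 6 = p / 6 + 1 := by omega
    have hpk : 6 * (p / 6) + 6 = p + 1 := by omega
    have key : (6 : ZMod p) * ((p / 6 : ℕ) : ZMod p) = -5 := by
      have hc : ((6 * (p / 6) + 6 : ℕ) : ZMod p) = ((p + 1 : ℕ) : ZMod p) := by rw [hpk]
      push_cast at hc
      rw [ZMod.natCast_self] at hc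
      linear_combination hc
    rw [hd3, hd6, ← ZMod.intCast_eq_intCast_iff]
    simp only [Int.cast_mul, Int.cast_pow, Int.cast_neg, Int.cast_one, Int.cast_natCast]
    apply mul_left_cancel₀ h6ne
    rw [h6, pow_succ, pow_succ, pow_mul]
    simp only [neg_one_sq, one_pow, one_mul, neg_mul, neg_neg, Nat.cast_add, Nat.cast_one]
    linear_combination -key
end

section
/- If p > 4 is a natural number satisfying (p-4)! ≡ (-1)^(⌊p/3⌋+1) · ⌊(p+1)/6⌋ (mod p), then p is prime. -/
lemma aux_mul_dvd_factorial {a b n : ℕ} (ha : 0 < a) (hab : a < b) (hb : b ≤ n) :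
    a * b ∣ n.factorial := by
  have h1 : a ∣ (b - 1).factorial := Nat.dvd_factorial ha (by omega)
  have h2 : a * b ∣ b.factorial := by
    have hb' : b.factorial = b * (b - 1).factorial := by
      cases b with
      | zero => omega
      | succ k => simp [Nat.factorial_succ]
    rw [hb', mul_comm a b]
    exact mul_dvd_mul_left b h1
  exact h2.trans (Nat.factorial_dvd_factorial hb)

theorem stmt8 (p : ℕ) (hp : 4 < p)
    (h : ((p - 4).factorial : ℤ) ≡ (-1) ^ (p / 3 + 1) * (((p + 1) / 6 : ℕ) : ℤ) [ZMOD p]) :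
    p.Prime := by
  by_contra hnp
  by_cases h6 : p = 6
  · subst h6; revert h; decide
  by_cases h9 : p = 9
  · subst h9; revert h; decide
  have hpne1 : p ≠ 1 := by omega
  have hap : p.minFac.Prime := Nat.minFac_prime hpne1
  obtain ⟨b, hb⟩ := Nat.minFac_dvd p
  have hmf : ∀ m, 2 ≤ m → m ∣ p → p.minFac ≤ m := fun m hm hd => Nat.minFac_le_of_dvd hm hd
  have haltp' : p.minFac < p := by
    rcases lt_or_eq_of_le (Nat.minFac_le (by omega : 0 < p)) with h' | h'
    · exact h'
    · exact absurd (h' ▸ Nat.minFac_prime hpne1) hnp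
  generalize hA : p.minFac = a at hap hb hmf haltp'
  have ha2 : 2 ≤ a := hap.two_le
  have haltp : a < p := haltp'
  have hb2 : 2 ≤ b := by nlinarith [hb]
  have hab : a ≤ b := hmf b hb2 ⟨a, by rw [hb, mul_comm]⟩
  have hdvd : p ∣ (p - 4).factorial := by
    rcases lt_or_eq_of_le hab with hlt | heq
    · -- a < b: both fit below p - 4
      have key : b + 4 ≤ p := by
        rcases Nat.lt_or_ge b 4 with h' | h'
        · interval_cases b <;> interval_cases a <;> omega
        · calc b + 4 ≤ b + b := by omega
            _ ≤ a * b := by nlinarith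
            _ = p := hb.symm
      exact (dvd_of_eq hb).trans
        (aux_mul_dvd_factorial (by omega) hlt (by omega))
    · -- p = a^2, a prime ≥ 5
      have ha5 : 5 ≤ a := by
        by_contra h'
        push_neg at h'
        interval_cases a
        · omega
        · omega
        · exact absurd hap (by norm_num)
      have key : 2 * a + 4 ≤ p := by
        have h1 : 2 * a + 4 ≤ a * a := by nlinarith
        have h2 : p = a * a := by rw [hb, ← heq]
        omega
      have h2a : a * (2 * a) ∣ (p - 4).factorial :=
        aux_mul_dvd_factorial (by omega) (by omega) (by omega)
      refine dvd_trans ?_ h2a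
      exact ⟨2, by rw [hb, ← heq]; ring⟩
  have hdvdZ : (p : ℤ) ∣ ((p - 4).factorial : ℤ) := Int.natCast_dvd_natCast.mpr hdvd
  have hdvd2 : (p : ℤ) ∣ (-1) ^ (p / 3 + 1) * (((p + 1) / 6 : ℕ) : ℤ) := by
    simpa using dvd_add h.dvd hdvdZ
  have hdvd3 : (p : ℤ) ∣ (((p + 1) / 6 : ℕ) : ℤ) := by
    have hu : IsUnit ((-1 : ℤ) ^ (p / 3 + 1)) := (isUnit_one.neg).pow _
    exact hu.dvd_mul_left.mp hdvd2
  have hdvd4 : p ∣ (p + 1) / 6 := Int.natCast_dvd_natCast.mp hdvd3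
  have hpos : 0 < (p + 1) / 6 := by omega
  have := Nat.le_of_dvd hpos hdvd4
  omega
end

section
/- If p ≥ 5 is prime, h = ⌊p/24⌋ and r = p - 24h, then 24 divides r² - 1 and (p-5)! ≡ r·h + (r²-1)/24 (mod p). -/
theorem stmt11 (p : ℕ) (hp : 5 ≤ p) (hprime : p.Prime) (h r : ℕ)
    (hh : h = p / 24) (hr : r = p - 24 * h) :
    (24 : ℤ) ∣ (r : ℤ) ^ 2 - 1 ∧
      (((p - 5).factorial : ℤ) ≡ (r : ℤ) * h + ((r : ℤ) ^ 2 - 1) / 24 [ZMOD p]) := by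
  haveI : Fact p.Prime := ⟨hprime⟩
  have hpr : p = 24 * h + r := by omega
  have h2 : ¬ (2 ∣ p) := fun hd => by
    rcases (Nat.Prime.eq_one_or_self_of_dvd hprime 2 hd) with h' | h' <;> omega
  have h3 : ¬ (3 ∣ p) := fun hd => by
    rcases (Nat.Prime.eq_one_or_self_of_dvd hprime 3 hd) with h' | h' <;> omega
  have h2' : p % 2 = 1 := by omega
  have h3' : p % 3 ≠ 0 := by omega
  have hrlt : r < 24 := by omega
  have hr2 : r % 2 = 1 := by omega
  have hr3 : r % 3 ≠ 0 := by omega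
  have hd : (24 : ℤ) ∣ (r : ℤ) ^ 2 - 1 := by
    interval_cases r <;> first | (exfalso; omega) | decide
  refine ⟨hd, ?_⟩
  obtain ⟨k, hk⟩ := hd
  have hdiv : ((r : ℤ) ^ 2 - 1) / 24 = k := by rw [hk]; exact Int.mul_ediv_cancel_left k (by norm_num)
  rw [hdiv, ← ZMod.intCast_eq_intCast_iff]
  have h24 : (24 : ZMod p) ≠ 0 := by
    intro h0
    have hdvd : p ∣ 24 := (ZMod.natCast_eq_zero_iff 24 p).mp (by exact_mod_cast h0)
    have := Nat.le_of_dvd (by norm_num) hdvd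
    interval_cases p <;> revert hdvd hprime <;> decide
  apply mul_left_cancel₀ h24
  -- LHS: 24 * (p-5)! = (p-1)! = -1 (Wilson)
  have hfac : (24 : ZMod p) * ((p - 5).factorial : ZMod p) = -1 := by
    have hw := ZMod.wilsons_lemma p
    have he : p - 1 = (p - 5) + 4 := by omega
    rw [he] at hw
    have em : ((p - 5 : ℕ) : ZMod p) = -5 := by
      rw [Nat.cast_sub hp]; simp
    rw [show (p - 5) + 4 = ((p-5)+3)+1 from rfl, Nat.factorial_succ,
      show (p - 5) + 3 = ((p-5)+2)+1 from rfl, Nat.factorial_succ,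
      show (p - 5) + 2 = ((p-5)+1)+1 from rfl, Nat.factorial_succ,
      Nat.factorial_succ] at hw
    push_cast at hw
    rw [em] at hw
    linear_combination hw
  have hp0 : ((24 * h + r : ℕ) : ZMod p) = 0 := by rw [← hpr]; simp
  have hkz : (24 : ZMod p) * ((k : ℤ) : ZMod p) = ((r:ℕ) : ZMod p) ^ 2 - 1 := by
    have h' := congrArg (Int.cast : ℤ → ZMod p) hk
    push_cast at h' ⊢
    linear_combination -h'
  push_cast at hp0 hkz ⊢
  rw [hfac]
  linear_combination -((r:ℕ) : ZMod p) * hp0 - hkz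
end

section
/- Let p ≥ 5 be a natural number, h = ⌊p/24⌋, r = p - 24h. If (p-5)! ≡ r·h + (r²-1)/24 (mod p) (with (r²-1)/24 an integer, i.e. 24 ∣ r²-1), then p is prime. -/
theorem stmt12 (p : ℕ) (hp : 5 ≤ p) (h r : ℕ)
    (hh : h = p / 24) (hr : r = p - 24 * h)
    (hdvd : (24 : ℤ) ∣ (r : ℤ) ^ 2 - 1)
    (hcong : ((p - 5).factorial : ℤ) ≡ (r : ℤ) * h + ((r : ℤ) ^ 2 - 1) / 24 [ZMOD p]) :
    p.Prime := by
  obtain ⟨m, rfl⟩ : ∃ m, p = m + 5 := ⟨p - 5, by omega⟩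
  obtain ⟨d, hd⟩ := hdvd
  have h24 : 24 * h ≤ m + 5 := by
    have := Nat.div_mul_le_self (m + 5) 24
    omega
  have hrn : (r : ℤ) = (m + 5 : ℕ) - 24 * h := by
    push_cast [hr]
    omega
  have hdq : ((r : ℤ) ^ 2 - 1) / 24 = d := by rw [hd]; simp [Int.mul_ediv_cancel_left]
  rw [hdq] at hcong
  simp only [Nat.add_sub_cancel] at hcong
  -- congruences for each factor
  have h2 : ((m : ℤ) + 3) ≡ -2 [ZMOD ((m : ℤ) + 5)] := Int.modEq_iff_dvd.mpr ⟨1, by ring⟩ |>.symm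
  have h3 : ((m : ℤ) + 2) ≡ -3 [ZMOD ((m : ℤ) + 5)] := Int.modEq_iff_dvd.mpr ⟨1, by ring⟩ |>.symm
  have h4 : ((m : ℤ) + 1) ≡ -4 [ZMOD ((m : ℤ) + 5)] := Int.modEq_iff_dvd.mpr ⟨1, by ring⟩ |>.symm
  have h1' : ((m : ℤ) + 4) ≡ -1 [ZMOD ((m : ℤ) + 5)] := Int.modEq_iff_dvd.mpr ⟨1, by ring⟩ |>.symm
  have hK : ((m : ℤ) + 4) * ((m : ℤ) + 3) * ((m : ℤ) + 2) * ((m : ℤ) + 1) ≡ 24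
      [ZMOD ((m : ℤ) + 5)] := by
    have heq : ((-1 : ℤ)) * -2 * -3 * -4 = 24 := by norm_num
    have := ((h1'.mul h2).mul h3).mul h4
    rwa [heq] at this
  have hmod : (((m : ℤ) + 5)) = ((m + 5 : ℕ) : ℤ) := by push_cast; ring
  have hcong' : ((m.factorial : ℤ)) ≡ (r : ℤ) * h + d [ZMOD ((m : ℤ) + 5)] := hmod ▸ hcong
  have hbig : (((m + 4).factorial : ℤ)) ≡
      24 * ((r : ℤ) * h + d) [ZMOD ((m : ℤ) + 5)] := by
    have hfac : (((m + 4).factorial : ℤ)) =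
        ((m : ℤ) + 4) * ((m : ℤ) + 3) * ((m : ℤ) + 2) * ((m : ℤ) + 1) * (m.factorial : ℤ) := by
      show ((Nat.factorial (m + 1 + 1 + 1 + 1) : ℤ)) = _
      simp [Nat.factorial_succ]
      push_cast
      ring
    rw [hfac]
    exact hK.mul hcong'
  have hfin : (((m + 4).factorial : ℤ)) ≡ -1 [ZMOD ((m : ℤ) + 5)] := by
    refine hbig.trans (Int.modEq_iff_dvd.mpr ⟨-(r : ℤ), ?_⟩)
    have hd' : (24 : ℤ) * d = (r : ℤ) ^ 2 - 1 := hd.symm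
    push_cast at hrn ⊢
    linear_combination (-(r : ℤ)) * hrn - hd'
  -- convert to ZMod and apply converse of Wilson
  apply Nat.prime_of_fac_equiv_neg_one _ (by omega)
  have : ((m + 5 - 1).factorial : ℕ) = (m + 4).factorial := by norm_num
  rw [this]
  have := (ZMod.intCast_eq_intCast_iff (((m + 4).factorial : ℤ)) (-1) (m + 5)).mpr
    (hmod ▸ hfin)
  simpa using this
end

section
/- Let k > 2, h ≥ 1, and p = (k-1)!·h + 1. If p is prime and k is even, then (p-k)! ≡ -h (mod p). -/
/-!
Wilson's theorem generalizes to `(p - k)! (k - 1)! ≡ (-1)^k (mod p)`, since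
`(p - 1)! / (p - k)! = (p - 1) ⋯ (p - k + 1) ≡ (-1)^(k-1) (k - 1)!`. For even `k` the right-hand
side is `1`, and `(k - 1)! ≡ -1 / h` because `(k - 1)! h = p - 1`.
-/

open Nat Polynomial

theorem descPochhammer_eval_neg_one (R : Type*) [Ring R] (k : ℕ) :
    (descPochhammer R k).eval (-1) = (-1) ^ k * (k ! : R) := by
  have h := ascPochhammer_eval_neg_eq_descPochhammer (R := R) (-1) k
  rw [neg_neg, ascPochhammer_eval_one] at h
  rw [h, ← mul_assoc, ← pow_add, ← two_mul, pow_mul, neg_one_sq, one_pow, one_mul]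

theorem ZMod.descFactorial_pred (n k : ℕ) [NeZero n] :
    ((n - 1).descFactorial k : ZMod n) = (-1) ^ k * (k ! : ZMod n) := by
  rw [← descPochhammer_eval_eq_descFactorial, Nat.cast_pred (NeZero.pos n), ZMod.natCast_self,
    zero_sub, descPochhammer_eval_neg_one]

theorem ZMod.factorial_sub_mul_factorial_pred {p k : ℕ} [Fact p.Prime] (hk : 1 ≤ k)
    (hkp : k ≤ p) : ((p - k)! : ZMod p) * (k - 1)! = (-1) ^ k := by
  have hwilson := ZMod.wilsons_lemma (p := p)
  rw [← Nat.factorial_mul_descFactorial (show k - 1 ≤ p - 1 by omega),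
    show p - 1 - (k - 1) = p - k by omega, Nat.cast_mul, ZMod.descFactorial_pred] at hwilson
  obtain ⟨j, rfl⟩ := Nat.exists_eq_add_of_le' hk
  rw [Nat.add_sub_cancel] at hwilson ⊢
  have hsq : ((-1 : ZMod p) ^ j) ^ 2 = 1 := by
    rw [← pow_mul]
    exact (even_two.mul_left j).neg_one_pow
  linear_combination (-1 : ZMod p) ^ j * hwilson - ((p - (j + 1))! * j ! : ZMod p) * hsq

theorem stmt15_general (k h p : ℕ) (hk : 2 < k) (hp : p = (k - 1).factorial * h + 1)
    (hprime : p.Prime) (hke : Even k) :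
    ((p - k).factorial : ℤ) ≡ -(h : ℤ) [ZMOD p] := by
  have := Fact.mk hprime
  have hh : h ≠ 0 := by
    rintro rfl
    exact Nat.not_prime_one (by simpa [hp] using hprime)
  have hkp : k ≤ p := by
    have := Nat.self_le_factorial (k - 1)
    have := Nat.le_mul_of_pos_right (k - 1)! (Nat.pos_of_ne_zero hh)
    omega
  have hwilson := ZMod.factorial_sub_mul_factorial_pred (p := p) (by omega) hkp
  rw [hke.neg_one_pow] at hwilson
  have hfac : ((k - 1)! : ZMod p) * h = -1 := by
    have := congrArg (Nat.cast : ℕ → ZMod p) hp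
    rw [ZMod.natCast_self, Nat.cast_add, Nat.cast_mul, Nat.cast_one] at this
    linear_combination -this
  rw [← ZMod.intCast_eq_intCast_iff]
  push_cast
  linear_combination -(h : ZMod p) * hwilson + ((p - k)! : ZMod p) * hfac

theorem stmt15 (k h p : ℕ) (hk : 2 < k) (hh : 1 ≤ h) (hp : p = (k - 1).factorial * h + 1)
    (hprime : p.Prime) (hke : Even k) :
    ((p - k).factorial : ℤ) ≡ -(h : ℤ) [ZMOD p] :=
  stmt15_general k h p hk hp hprime hke
end

section
/- Let k > 2, h ≥ 1, and p = (k-1)!·h + 1. If p is prime and k is odd, then (p-k)! ≡ h (mod p). -/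
lemma aux16 (p : ℕ) (hp : p.Prime) : ∀ j, j ≤ p - 1 →
    ((p - 1 - j).factorial : ZMod p) * (-1)^j * (j.factorial : ZMod p) = -1 := by
  haveI := Fact.mk hp
  intro j
  induction j with
  | zero => simpa using ZMod.wilsons_lemma p
  | succ n ih =>
    intro hle
    have hn : n ≤ p - 1 := Nat.le_of_succ_le hle
    have h1 : p - 1 - n = (p - 1 - (n + 1)) + 1 := by omega
    have h2 : p - 1 - n = p - (n + 1) := by omega
    have hcast : ((p - 1 - n : ℕ) : ZMod p) = -((n : ZMod p) + 1) := by
      rw [h2, Nat.cast_sub (by omega : n + 1 ≤ p)]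
      push_cast
      simp [ZMod.natCast_self]
    have := ih hn
    rw [h1, Nat.factorial_succ, ← h1] at this
    push_cast at this
    rw [hcast] at this
    rw [Nat.factorial_succ]
    push_cast
    ring_nf
    ring_nf at this
    linear_combination this

theorem stmt16 (k h p : ℕ) (hk : 2 < k) (hh : 1 ≤ h) (hp : p = (k - 1).factorial * h + 1)
    (hprime : p.Prime) (hko : Odd k) :
    ((p - k).factorial : ℤ) ≡ (h : ℤ) [ZMOD p] := by
  haveI := Fact.mk hprime
  have hfk : k - 1 ≤ (k - 1).factorial := Nat.self_le_factorial _
  have hkp : k ≤ p := by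
    have := Nat.le_mul_of_pos_right (k - 1).factorial hh
    omega
  have h1 := aux16 p hprime (k - 1) (by omega)
  have hpk : p - 1 - (k - 1) = p - k := by omega
  have heven : Even (k - 1) := by
    rcases hko with ⟨m, hm⟩
    exact ⟨m, by omega⟩
  rw [hpk, heven.neg_one_pow, mul_one] at h1
  -- (k-1)! * h = -1 in ZMod p
  have h2 : ((k - 1).factorial : ZMod p) * (h : ZMod p) = -1 := by
    have h0 : (((k - 1).factorial * h + 1 : ℕ) : ZMod p) = 0 := by
      rw [← hp]; exact ZMod.natCast_self p
    push_cast at h0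
    linear_combination h0
  have hne : ((k - 1).factorial : ZMod p) ≠ 0 := by
    rw [Ne, ZMod.natCast_eq_zero_iff]
    intro hdvd
    have := (Nat.Prime.dvd_factorial hprime).mp hdvd
    omega
  have h3 : (((p - k).factorial : ℕ) : ZMod p) = (h : ZMod p) := by
    have h2' : (h : ZMod p) * ((k - 1).factorial : ZMod p) = -1 := by
      rw [mul_comm]; exact h2
    exact mul_right_cancel₀ hne (h1.trans h2'.symm)
  rw [← ZMod.intCast_eq_intCast_iff]
  push_cast
  exact h3
end

section
/- Let k > 2, h ≥ 1, and p = (k-1)!·h - 1 with p > 1. If p is prime and k is even, then (p-k)! ≡ h (mod p). -/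
lemma aux17 (p : ℕ) : ∀ j, j ≤ p → (((p - 1).descFactorial j : ℕ) : ZMod p)
    = (-1) ^ j * (j.factorial : ZMod p) := by
  intro j
  induction j with
  | zero => simp
  | succ j ih =>
    intro hj
    have hj' : j ≤ p := by omega
    rw [Nat.descFactorial_succ, Nat.cast_mul, ih hj']
    have h1 : p - 1 - j = p - (j + 1) := by omega
    have h2 : ((p - (j + 1) : ℕ) : ZMod p) = -((j : ZMod p) + 1) := by
      rw [Nat.cast_sub hj]
      push_cast
      simp
    rw [h1, h2, Nat.factorial_succ]
    push_cast
    ring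

theorem stmt17 (k h p : ℕ) (hk : 2 < k) (hh : 1 ≤ h) (hp : p = (k - 1).factorial * h - 1)
    (hp1 : 1 < p) (hprime : p.Prime) (hke : Even k) :
    ((p - k).factorial : ℤ) ≡ (h : ℤ) [ZMOD p] := by
  haveI : Fact p.Prime := ⟨hprime⟩
  have hk4 : 4 ≤ k := by rcases hke with ⟨m, hm⟩; omega
  have hfp : 1 ≤ (k - 1).factorial * h := Nat.mul_pos (k - 1).factorial_pos hh
  have hph : p + 1 = (k - 1).factorial * h := by omega
  have hfge : k + 1 ≤ (k - 1).factorial := by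
    have h2 : (k - 2).factorial ≥ k - 2 := Nat.self_le_factorial _
    have h3 : (k - 1).factorial = (k - 1) * (k - 2).factorial := by
      have : k - 1 = (k - 2) + 1 := by omega
      rw [this, Nat.factorial_succ]
    have h4 : (k - 1) * (k - 2) ≥ k + 1 := by
      obtain ⟨j, rfl⟩ : ∃ j, k = j + 4 := ⟨k - 4, by omega⟩
      have e1 : j + 4 - 1 = j + 3 := by omega
      have e2 : j + 4 - 2 = j + 2 := by omega
      rw [e1, e2]; nlinarith
    calc k + 1 ≤ (k - 1) * (k - 2) := h4
      _ ≤ (k - 1) * (k - 2).factorial := Nat.mul_le_mul_left _ h2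
      _ = (k - 1).factorial := h3.symm
  have hkp : k ≤ p := by
    have : (k - 1).factorial ≤ (k - 1).factorial * h := Nat.le_mul_of_pos_right _ hh
    omega
  -- factorial decomposition
  have hdf : (p - k).factorial * (p - 1).descFactorial (k - 1) = (p - 1).factorial := by
    have h5 : k - 1 ≤ p - 1 := by omega
    have := Nat.factorial_mul_descFactorial h5
    have h6 : p - 1 - (k - 1) = p - k := by omega
    rwa [h6] at this
  have hwil : (((p - 1).factorial : ℕ) : ZMod p) = -1 := ZMod.wilsons_lemma p
  have hcast : (((p - k).factorial : ℕ) : ZMod p) * ((-1) ^ (k - 1) * ((k - 1).factorial : ZMod p)) = -1 := by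
    rw [← aux17 p (k - 1) (by omega), ← Nat.cast_mul, hdf, hwil]
  have hodd : Odd (k - 1) := by
    rcases hke with ⟨m, hm⟩
    exact ⟨m - 1, by omega⟩
  rw [hodd.neg_one_pow] at hcast
  have hunit : (((p - k).factorial : ℕ) : ZMod p) * (((k - 1).factorial : ℕ) : ZMod p) = 1 := by
    have := hcast
    push_cast at this ⊢
    linear_combination -this
  have hh1 : (((k - 1).factorial : ℕ) : ZMod p) * (h : ZMod p) = 1 := by
    have h7 : (((p + 1 : ℕ)) : ZMod p) = (((k - 1).factorial * h : ℕ) : ZMod p) := by rw [hph]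
    push_cast at h7
    simpa using h7.symm
  have hfinal : (((p - k).factorial : ℕ) : ZMod p) = (h : ZMod p) := by
    calc (((p - k).factorial : ℕ) : ZMod p)
        = (((p - k).factorial : ℕ) : ZMod p) * ((((k - 1).factorial : ℕ) : ZMod p) * (h : ZMod p)) := by
          rw [hh1, mul_one]
      _ = ((((p - k).factorial : ℕ) : ZMod p) * (((k - 1).factorial : ℕ) : ZMod p)) * (h : ZMod p) := by ring
      _ = (h : ZMod p) := by rw [hunit, one_mul]
  rw [← ZMod.intCast_eq_intCast_iff]
  push_cast
  exact_mod_cast hfinal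
end

section
/- Let k > 2, h ≥ 1, and p = (k-1)!·h + 1. If (p-k)! ≡ (-1)^(k+1)·h (mod p), then p is prime. -/
lemma fac_step (p k : ℕ) (hk : 1 ≤ k) (hkp : k ≤ p) :
    ((p - 1).factorial : ℤ) ≡
      ((p - k).factorial : ℤ) * (-1) ^ (k - 1) * ((k - 1).factorial : ℤ) [ZMOD p] := by
  induction k with
  | zero => omega
  | succ n ih =>
    rcases Nat.eq_or_lt_of_le hk with h1 | h1
    · simp [← h1]
    · have hn1 : 1 ≤ n := by omega
      have hnp : n ≤ p := by omega
      have ih' := ih hn1 hnp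
      have hfac : (p - n).factorial = (p - n) * (p - (n + 1)).factorial := by
        have : p - n = (p - (n + 1)) + 1 := by omega
        rw [this, Nat.factorial_succ]
      have hpn : ((p - n : ℕ) : ℤ) ≡ (-(n : ℤ)) [ZMOD p] := by
        have : ((p - n : ℕ) : ℤ) = (p : ℤ) - n := by
          push_cast [Nat.cast_sub hnp]; ring
        rw [this]
        have : (p : ℤ) - n - (-(n : ℤ)) = p := by ring
        exact (Int.modEq_iff_dvd.mpr ⟨-1, by ring⟩)
      calc ((p - 1).factorial : ℤ)
          ≡ ((p - n).factorial : ℤ) * (-1) ^ (n - 1) * ((n - 1).factorial : ℤ) [ZMOD p] := ih'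
        _ = ((p - n : ℕ) : ℤ) * ((p - (n + 1)).factorial : ℤ) * (-1) ^ (n - 1)
              * ((n - 1).factorial : ℤ) := by rw [hfac]; push_cast; ring
        _ ≡ (-(n : ℤ)) * ((p - (n + 1)).factorial : ℤ) * (-1) ^ (n - 1)
              * ((n - 1).factorial : ℤ) [ZMOD p] := by
            exact (hpn.mul_right _).mul_right _ |>.mul_right _
        _ = ((p - (n + 1)).factorial : ℤ) * (-1) ^ (n + 1 - 1) * ((n + 1 - 1).factorial : ℤ) := by
            have h3 : n = (n - 1) + 1 := by omega
            have e1 : n.factorial = n * (n - 1).factorial := by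
              conv_lhs => rw [h3]
              rw [Nat.factorial_succ, ← h3]
            have e2 : ((-1 : ℤ)) ^ n = (-1) ^ (n - 1) * (-1) := by
              conv_lhs => rw [h3]
              rw [pow_succ]
            simp only [Nat.add_sub_cancel, e1, e2]
            push_cast; ring

theorem stmt18 (k h p : ℕ) (hk : 2 < k) (hh : 1 ≤ h) (hp : p = (k - 1).factorial * h + 1)
    (hcong : ((p - k).factorial : ℤ) ≡ (-1) ^ (k + 1) * (h : ℤ) [ZMOD p]) :
    p.Prime := by
  have hfk : k ≤ (k - 1).factorial + 1 := by
    have := Nat.self_le_factorial (k - 1)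
    omega
  have hfh : (k - 1).factorial ≤ (k - 1).factorial * h := Nat.le_mul_of_pos_right _ hh
  have hkp : k ≤ p := by omega
  have key := fac_step p k (by omega) hkp
  have h2 : ((p - 1).factorial : ℤ) ≡
      ((-1) ^ (k + 1) * (h : ℤ)) * (-1) ^ (k - 1) * ((k - 1).factorial : ℤ) [ZMOD p] :=
    key.trans (((hcong.mul_right _).mul_right _))
  have h3 : ((-1 : ℤ)) ^ (k + 1) * (h : ℤ) * (-1) ^ (k - 1) * ((k - 1).factorial : ℤ)
      = (-1) ^ ((k + 1) + (k - 1)) * (((k - 1).factorial * h : ℕ) : ℤ) := by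
    push_cast; rw [pow_add]; ring
  have h4 : ((k + 1) + (k - 1)) = 2 * k := by omega
  have h5 : ((p - 1).factorial : ℤ) ≡ (((k - 1).factorial * h : ℕ) : ℤ) [ZMOD p] := by
    rw [h3, h4, pow_mul] at h2
    simpa using h2
  have h6 : (((k - 1).factorial * h : ℕ) : ℤ) ≡ -1 [ZMOD p] := by
    have : (((k - 1).factorial * h : ℕ) : ℤ) - (-1) = p := by
      rw [hp]; push_cast; ring
    exact Int.modEq_iff_dvd.mpr ⟨-1, by rw [← this]; ring⟩
  have h7 : ((p - 1).factorial : ℤ) ≡ -1 [ZMOD p] := h5.trans h6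
  have hp1 : p ≠ 1 := by
    have : 2 ≤ (k - 1).factorial := by
      have : 2 ≤ k - 1 := by omega
      calc 2 ≤ k - 1 := this
        _ ≤ (k - 1).factorial := Nat.self_le_factorial _
    omega
  apply Nat.prime_of_fac_equiv_neg_one _ hp1
  have := (ZMod.intCast_eq_intCast_iff _ _ _).mpr h7
  push_cast at this
  exact_mod_cast this
end
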